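/- For every n ≥ 0 and every k ∈ ℤ, the Fourier–Stieltjes coefficient of μ_n satisfies μ̂_n(k) = ∏_{m=1}^{n} (1/3)(1 + 2 cos(2πk / 2^m)), where the empty product is 1. -/

import Mathlib

open MeasureTheory Filter Topology Real
open scoped ENNReal

noncomputable section

/-- Stern's diatomic sequence: s(0)=0, s(1)=1, s(2n)=s(n), s(2n+1)=s(n)+s(n+1). -/
def stern : ℕ → ℕ
  | 0 => 0
  | 1 => 1
  | n + 2 =>
    if h : n % 2 = 0 then stern (n / 2 + 1)
    else stern (n / 2 + 1) + stern (n / 2 + 2)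
decreasing_by all_goals omega
/-- The probability measure μ_n = 3^{-n} ∑_{m=0}^{2^n-1} s(2^n+m) δ_{m/2^n} on the 1-torus. -/
def sternMeasure (n : ℕ) : Measure UnitAddCircle :=
  ((3 : ℝ≥0∞) ^ n)⁻¹ • ∑ m ∈ Finset.range (2 ^ n),
    (stern (2 ^ n + m) : ℝ≥0∞) • Measure.dirac ((m / 2 ^ n : ℝ) : UnitAddCircle)
/-- The Fourier–Stieltjes coefficient ν̂(k) = ∫_𝕋 e^{-2πikx} dν(x) of a measure ν on the 1-torus. -/
def fourierCoeffMeasure (ν : Measure UnitAddCircle) (k : ℤ) : ℂ :=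
  ∫ x, fourier (-k) x ∂ν

/-!
Write `ζ = e^{-2πik/2^n}` and `S_n(w) = ∑_{m < 2^n} s(2^n + m) w^m`, so that `μ̂_n(k) = 3^{-n} S_n(ζ)`.
Splitting `S_{n+1}(w)` by the parity of `m`, the Stern recursion expresses it through `S_n(w^2)`
and the shifted sum `∑ s(2^n + m + 1) w^{2m+1}`; for a `2^{n+1}`-th root of unity `w` the latter
equals `w⁻¹ S_n(w^2)`, because `s(2^n) = s(2^{n+1}) = 1` makes the weights cyclic modulo `2^n`.
Hence `S_{n+1}(w) = (1 + w + w⁻¹) S_n(w^2)`; for `w = e^{-2πik/2^{n+1}}` one has `w^2 = ζ` and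
`1 + w + w⁻¹ = 1 + 2 cos(2πk/2^{n+1})`.
-/

lemma stern_two_mul (n : ℕ) : stern (2 * n) = stern n := by
  match n with
  | 0 => rfl
  | n + 1 =>
    rw [show 2 * (n + 1) = 2 * n + 2 by ring, stern, dif_pos (by omega)]
    congr 1
    omega

lemma stern_two_mul_add_one (n : ℕ) : stern (2 * n + 1) = stern n + stern (n + 1) := by
  match n with
  | 0 => simp [stern]
  | n + 1 =>
    rw [show 2 * (n + 1) + 1 = (2 * n + 1) + 2 by ring, stern, dif_neg (by omega)]
    congr 2 <;> omega

lemma stern_two_pow (n : ℕ) : stern (2 ^ n) = 1 := by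
  induction n with
  | zero => simp [stern]
  | succ n ih => rwa [pow_succ', stern_two_mul]

lemma Finset.sum_range_two_mul {M : Type*} [AddCommMonoid M] (N : ℕ) (f : ℕ → M) :
    ∑ m ∈ range (2 * N), f m = ∑ m ∈ range N, (f (2 * m) + f (2 * m + 1)) := by
  induction N with
  | zero => simp
  | succ N ih => rw [mul_add_one, sum_range_succ, sum_range_succ, sum_range_succ, ih, add_assoc]

def sternSum {R : Type*} [Semiring R] (n : ℕ) (w : R) : R :=
  ∑ m ∈ Finset.range (2 ^ n), (stern (2 ^ n + m) : R) * w ^ m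

lemma sternSum_shift {R : Type*} [CommRing R] {n : ℕ} {u : R} (hu : u ^ 2 ^ n = 1) :
    ∑ m ∈ Finset.range (2 ^ n), (stern (2 ^ n + m + 1) : R) * u ^ (m + 1) = sternSum n u := by
  set f : ℕ → R := fun m ↦ (stern (2 ^ n + m) : R) * u ^ m
  have hfirst : f 0 = 1 := by simp [f, stern_two_pow]
  have hlast : f (2 ^ n) = 1 := by simp [f, ← two_mul, ← pow_succ', stern_two_pow, hu]
  have := (Finset.sum_range_succ' f (2 ^ n)).symm.trans (Finset.sum_range_succ f (2 ^ n))
  rw [hfirst, hlast] at this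
  exact add_right_cancel this

lemma sternSum_succ {K : Type*} [Field K] {n : ℕ} {w : K} (hw : w ^ 2 ^ (n + 1) = 1) :
    sternSum (n + 1) w = (1 + w + w⁻¹) * sternSum n (w ^ 2) := by
  have hw0 : w ≠ 0 := by rintro rfl; simp at hw
  have hu : (w ^ 2) ^ 2 ^ n = 1 := by rwa [← pow_mul, ← pow_succ']
  have hparity : sternSum (n + 1) w = ∑ m ∈ Finset.range (2 ^ n),
      ((stern (2 ^ n + m) : K) * (w ^ 2) ^ m + w * ((stern (2 ^ n + m) : K) * (w ^ 2) ^ m)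
        + w⁻¹ * ((stern (2 ^ n + m + 1) : K) * (w ^ 2) ^ (m + 1))) := by
    rw [sternSum, pow_succ', Finset.sum_range_two_mul]
    refine Finset.sum_congr rfl fun m _ ↦ ?_
    rw [← mul_add, stern_two_mul, show 2 * 2 ^ n + (2 * m + 1) = 2 * (2 ^ n + m) + 1 by ring,
      stern_two_mul_add_one]
    field_simp
    push_cast
    ring
  rw [hparity, Finset.sum_add_distrib, Finset.sum_add_distrib, ← Finset.mul_sum,
    ← Finset.mul_sum, sternSum_shift hu, sternSum]
  ring

lemma fourier_nsmul {T : ℝ} (k : ℤ) (m : ℕ) (x : AddCircle T) :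
    fourier k (m • x) = fourier k x ^ m := by
  rw [fourier_apply, fourier_apply, smul_comm, AddCircle.toCircle_nsmul, Circle.coe_pow]

lemma fourier_coe_natCast_div_two_pow (k : ℤ) (n m : ℕ) :
    fourier k ((m / 2 ^ n : ℝ) : UnitAddCircle) =
      fourier k (((2 ^ n)⁻¹ : ℝ) : UnitAddCircle) ^ m := by
  rw [← fourier_nsmul, ← AddCircle.coe_nsmul, nsmul_eq_mul, div_eq_mul_inv]

lemma fourier_add_inv {T : ℝ} (k : ℤ) (x : ℝ) :
    fourier k (x : AddCircle T) + (fourier k (x : AddCircle T))⁻¹ =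
      2 * (Real.cos (2 * π * k * x / T) : ℂ) := by
  rw [fourier_coe_apply, ← Complex.exp_neg, Complex.ofReal_cos, Complex.two_cos]
  push_cast
  ring_nf

lemma sternSum_fourier_neg_eq_prod (k : ℤ) (n : ℕ) :
    sternSum n (fourier (-k) (((2 ^ n)⁻¹ : ℝ) : UnitAddCircle)) =
      ((∏ m ∈ Finset.Icc 1 n, (1 + 2 * Real.cos (2 * π * k / 2 ^ m)) : ℝ) : ℂ) := by
  induction n with
  | zero => simp [sternSum, stern]
  | succ n ih =>
    have hroot : fourier (-k) (((2 ^ (n + 1))⁻¹ : ℝ) : UnitAddCircle) ^ 2 ^ (n + 1) = 1 := by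
      rw [← fourier_coe_natCast_div_two_pow, Nat.cast_pow, Nat.cast_two, div_self (by positivity),
        AddCircle.coe_period, fourier_eval_zero]
    have hsq : fourier (-k) (((2 ^ (n + 1))⁻¹ : ℝ) : UnitAddCircle) ^ 2 =
        fourier (-k) (((2 ^ n)⁻¹ : ℝ) : UnitAddCircle) := by
      rw [← fourier_coe_natCast_div_two_pow]
      congr 2
      field_simp
      push_cast
      ring
    rw [sternSum_succ hroot, hsq, ih, add_assoc, fourier_add_inv,
      Finset.prod_Icc_succ_top (by omega)]
    push_cast
    rw [← Complex.cos_neg]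
    ring_nf

lemma integral_finsetSum_smul_dirac {ι α E : Type*} [MeasurableSpace α]
    [MeasurableSingletonClass α] [NormedAddCommGroup E] [NormedSpace ℝ E] [CompleteSpace E]
    (s : Finset ι) {c : ι → ℝ≥0∞} (hc : ∀ i, c i ≠ ∞) (x : ι → α) (f : α → E) :
    ∫ y, f y ∂(∑ i ∈ s, c i • Measure.dirac (x i)) = ∑ i ∈ s, (c i).toReal • f (x i) := by
  rw [integral_finsetSum_measure fun i _ ↦ (integrable_dirac (by simp)).smul_measure (hc i)]
  simp [integral_smul_measure, integral_dirac]

lemma fourierCoeffMeasure_sternMeasure (n : ℕ) (k : ℤ) :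
    fourierCoeffMeasure (sternMeasure n) k =
      ((3 : ℂ) ^ n)⁻¹ * sternSum n (fourier (-k) (((2 ^ n)⁻¹ : ℝ) : UnitAddCircle)) := by
  rw [fourierCoeffMeasure, sternMeasure, integral_smul_measure,
    integral_finsetSum_smul_dirac _ fun _ ↦ ENNReal.natCast_ne_top _, sternSum,
    Finset.mul_sum, Finset.smul_sum]
  refine Finset.sum_congr rfl fun m _ ↦ ?_
  rw [fourier_coe_natCast_div_two_pow]
  simp [Complex.real_smul]

/-- For every n ≥ 0 and k ∈ ℤ: μ̂_n(k) = ∏_{m=1}^{n} (1/3)(1 + 2 cos(2πk/2^m)). -/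
theorem fourierCoeff_sternMeasure (n : ℕ) (k : ℤ) :
    fourierCoeffMeasure (sternMeasure n) k =
      ((∏ m ∈ Finset.Icc 1 n,
        (1 / 3) * (1 + 2 * Real.cos (2 * π * (k : ℝ) / 2 ^ m)) : ℝ) : ℂ) := by
  rw [fourierCoeffMeasure_sternMeasure, sternSum_fourier_neg_eq_prod, Finset.prod_mul_distrib,
    Finset.prod_const, Nat.card_Icc, Nat.add_sub_cancel]
  push_cast
  rw [one_div, inv_pow, mul_comm]
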